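/- The pre-processed improvement M_{λ,φ}(Θ) := max_{Φ∈DI} ||Δ Θ Φ (λ − μΛ_φ)||_1 − |λ−μ| is non-negative for every quantum channel Θ. -/

import Mathlib

open Matrix Complex
open scoped ComplexOrder

/-- A superoperator: a ℂ-linear map from operators on `ι` to operators on `κ`. -/
abbrev SO (ι κ : Type*) [Fintype ι] [DecidableEq ι] [Fintype κ] [DecidableEq κ] :=
  Matrix ι ι ℂ →ₗ[ℂ] Matrix κ κ ℂ

/-- Choi matrix of a superoperator. -/
noncomputable def choi {ι κ : Type*} [Fintype ι] [DecidableEq ι] [Fintype κ] [DecidableEq κ]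
    (Θ : SO ι κ) : Matrix (κ × ι) (κ × ι) ℂ :=
  Matrix.of fun p q => Θ (Matrix.single p.2 q.2 1) p.1 q.1

/-- A quantum state: positive semidefinite with unit trace. -/
def IsState {ι : Type*} [Fintype ι] (ρ : Matrix ι ι ℂ) : Prop := ρ.PosSemidef ∧ ρ.trace = 1

/-- A quantum channel: completely positive (PSD Choi matrix) and trace preserving. -/
def IsChannel {ι κ : Type*} [Fintype ι] [DecidableEq ι] [Fintype κ] [DecidableEq κ]
    (Θ : SO ι κ) : Prop :=
  (choi Θ).PosSemidef ∧ ∀ ρ, (Θ ρ).trace = ρ.trace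

/-- Total dephasing channel in the fixed incoherent basis. -/
noncomputable def deph {ι : Type*} [Fintype ι] [DecidableEq ι] : SO ι ι where
  toFun ρ := Matrix.of fun i j => if i = j then ρ i j else 0
  map_add' := by
    intro x y; ext i j
    by_cases h : i = j <;> simp [h]
  map_smul' := by
    intro c x; ext i j
    by_cases h : i = j <;> simp [h]

/-- Phase-encoding unitary channel `Λ_φ`. -/
noncomputable def phaseCh {ι : Type*} [Fintype ι] [DecidableEq ι] (φ : ι → ℝ) : SO ι ι where
  toFun ρ := Matrix.of fun i j => Complex.exp (Complex.I * ((φ i : ℂ) - (φ j : ℂ))) * ρ i j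
  map_add' := by
    intro x y; ext i j; simp [mul_add]
  map_smul' := by
    intro c x; ext i j; simp; ring

/-- The superoperator `λ·id − (1−λ)·Λ_φ`. -/
noncomputable def diffOp {ι : Type*} [Fintype ι] [DecidableEq ι] (lam : ℝ) (φ : ι → ℝ) :
    SO ι ι :=
  (lam : ℂ) • LinearMap.id - ((1 - lam : ℝ) : ℂ) • phaseCh φ

/-- Trace norm of a matrix: sum of singular values. -/
noncomputable def traceNorm {ι : Type*} [Fintype ι] [DecidableEq ι]
    (M : Matrix ι ι ℂ) : ℝ :=
  ∑ i, Real.sqrt ((Matrix.isHermitian_conjTranspose_mul_self M).eigenvalues i)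

/-- `Θ ⊗ id` acting on a composite system. -/
noncomputable def tensorId {ι κ ν : Type*} [Fintype ι] [DecidableEq ι] [Fintype κ]
    [DecidableEq κ] [Fintype ν] [DecidableEq ν] (Θ : SO ι κ) : SO (ι × ν) (κ × ν) where
  toFun ρ := Matrix.of fun p q =>
    ∑ i, ∑ j, Θ (Matrix.single i j 1) p.1 q.1 * ρ (i, p.2) (j, q.2)
  map_add' := by
    intro x y; ext p q
    simp [Matrix.add_apply, mul_add, Finset.sum_add_distrib]
  map_smul' := by
    intro c x; ext p q
    simp only [Matrix.of_apply, Matrix.smul_apply, smul_eq_mul, RingHom.id_apply,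
      Finset.mul_sum]
    exact Finset.sum_congr rfl fun i _ => Finset.sum_congr rfl fun j _ => by ring

/-- Detection incoherent channels: `Δ Φ = Δ Φ Δ`. -/
def IsDI {ι κ : Type*} [Fintype ι] [DecidableEq ι] [Fintype κ] [DecidableEq κ]
    (Φ : SO ι κ) : Prop :=
  deph ∘ₗ Φ = deph ∘ₗ Φ ∘ₗ deph

/-- Maximally incoherent channels: `Ψ Δ = Δ Ψ Δ`. -/
def IsMIO {ι κ : Type*} [Fintype ι] [DecidableEq ι] [Fintype κ] [DecidableEq κ]
    (Ψ : SO ι κ) : Prop :=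
  Ψ ∘ₗ deph = deph ∘ₗ Ψ ∘ₗ deph

/-- The pre-processed improvement `M_{λ,φ}(Θ)`. -/
noncomputable def Mpre {α β γ : Type*} [Fintype α] [DecidableEq α] [Fintype β] [DecidableEq β]
    [Fintype γ] [DecidableEq γ] (lam : ℝ) (φ : α → ℝ) (Θ : SO β γ) : ℝ :=
  sSup {x : ℝ | ∃ (Φ : SO α β) (ρ : Matrix α α ℂ), IsChannel Φ ∧ IsDI Φ ∧ IsState ρ ∧
    x = traceNorm (deph (Θ (Φ (diffOp lam φ ρ))))} - |lam - (1 - lam)|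

/-- The post-processed improvement `N_{λ,φ}(Θ)`. -/
noncomputable def Npost {α β γ : Type*} [Fintype α] [DecidableEq α] [Fintype β] [DecidableEq β]
    [Fintype γ] [DecidableEq γ] (lam : ℝ) (φ : γ → ℝ) (Θ : SO α β) : ℝ :=
  sSup {x : ℝ | ∃ (Ψ : SO β γ) (ρ : Matrix α α ℂ), IsChannel Ψ ∧ IsMIO Ψ ∧ IsState ρ ∧
    x = traceNorm (diffOp lam φ (Ψ (Θ (deph ρ))))} - |lam - (1 - lam)|

/-! The replacement channel `ρ ↦ tr ρ • |b⟩⟨b|` is detection incoherent, and on the incoherent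
state `|a⟩⟨a|`, which `Λ_φ` fixes, `λ − μ Λ_φ` is multiplication by `λ − μ`; so `|λ − μ|` is one of
the values over which the maximum is taken. As `sSup` of an unbounded set of reals is `0`, the
values must also be bounded: each is the `ℓ¹`-norm of the diagonal of `λ σ − μ τ` for two states
`σ, τ`, hence at most `|λ| + |μ|`. -/

section

variable {ι : Type*} [Fintype ι] [DecidableEq ι]

theorem Matrix.IsHermitian.sum_eigenvalues_eq_of_eq_diagonal {A : Matrix ι ι ℂ}
    (hA : A.IsHermitian) {d : ι → ℝ} (hd : A = diagonal fun i => (d i : ℂ)) (f : ℝ → ℝ) :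
    ∑ i, f (hA.eigenvalues i) = ∑ i, f (d i) := by
  have hroots : Multiset.map ((↑) : ℝ → ℂ) (Multiset.map hA.eigenvalues Finset.univ.val) =
      Multiset.map ((↑) : ℝ → ℂ) (Multiset.map d Finset.univ.val) :=
    calc _ = A.charpoly.roots := by rw [hA.roots_charpoly_eq_eigenvalues, Multiset.map_map]; rfl
      _ = _ := by
        rw [hd, charpoly_diagonal, Multiset.map_map,
          ← Polynomial.roots_multiset_prod_X_sub_C (Multiset.map _ Finset.univ.val),
          Multiset.map_map]
        rfl
  have hmap := Multiset.map_injective Complex.ofReal_injective hroots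
  simpa [Multiset.map_map] using congrArg (fun s => (s.map f).sum) hmap

theorem traceNorm_diagonal (m : ι → ℂ) : traceNorm (diagonal m) = ∑ i, ‖m i‖ := by
  have hsq : (diagonal m)ᴴ * diagonal m = diagonal fun i => ((‖m i‖ ^ 2 : ℝ) : ℂ) := by
    rw [diagonal_conjTranspose, diagonal_mul_diagonal]
    congr 1
    ext i
    simp [Complex.conj_mul']
  rw [traceNorm, Matrix.IsHermitian.sum_eigenvalues_eq_of_eq_diagonal _ hsq]
  simp

variable {κ : Type*} [Fintype κ] [DecidableEq κ]

theorem apply_eq_sum_choi (Θ : SO ι κ) (ρ : Matrix ι ι ℂ) (p q : κ) :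
    Θ ρ p q = ∑ i, ∑ j, ρ i j * choi Θ (p, i) (q, j) := by
  conv_lhs => rw [matrix_eq_sum_single ρ]
  simp only [map_sum, Matrix.sum_apply, choi, of_apply]
  refine Finset.sum_congr rfl fun i _ => Finset.sum_congr rfl fun j _ => ?_
  rw [show single i j (ρ i j) = ρ i j • single i j 1 by simp, map_smul]
  rfl

theorem apply_vecMulVec_self_star (Θ : SO ι κ) (v : ι → ℂ) :
    Θ (vecMulVec v (star v)) =
      (of fun (a : κ × ι) p => if a.1 = p then star (v a.2) else 0)ᴴ * choi Θ *
        of fun (a : κ × ι) p => if a.1 = p then star (v a.2) else 0 := by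
  ext p q
  rw [apply_eq_sum_choi, Finset.sum_comm]
  simp [vecMulVec_apply, mul_apply, Fintype.sum_prod_type, Finset.sum_mul, apply_ite,
    mul_right_comm _ (choi Θ _ _)]

theorem phaseCh_eq (φ : ι → ℝ) (ρ : Matrix ι ι ℂ) :
    phaseCh φ ρ = diagonal (fun i => Complex.exp (Complex.I * φ i)) * ρ *
      (diagonal (fun i => Complex.exp (Complex.I * φ i)))ᴴ := by
  ext i j
  simp [phaseCh, diagonal_mul, mul_diagonal, ← Complex.exp_conj, mul_sub, Complex.exp_sub,
    Complex.exp_neg, div_eq_mul_inv, mul_right_comm]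

theorem posSemidef_apply_of_posSemidef_choi {Θ : SO ι κ} (hΘ : (choi Θ).PosSemidef)
    {ρ : Matrix ι ι ℂ} (hρ : ρ.PosSemidef) : (Θ ρ).PosSemidef := by
  obtain ⟨m, v, rfl⟩ := posSemidef_iff_eq_sum_vecMulVec.mp hρ
  rw [map_sum]
  exact posSemidef_sum _ fun k _ =>
    apply_vecMulVec_self_star Θ (v k) ▸ hΘ.conjTranspose_mul_mul_same _

theorem IsChannel.isState_apply {Θ : SO ι κ} (hΘ : IsChannel Θ) {ρ : Matrix ι ι ℂ}
    (hρ : IsState ρ) : IsState (Θ ρ) :=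
  ⟨posSemidef_apply_of_posSemidef_choi hΘ.1 hρ.1, (hΘ.2 ρ).trans hρ.2⟩

theorem IsState.phaseCh (φ : ι → ℝ) {ρ : Matrix ι ι ℂ} (hρ : IsState ρ) :
    IsState (phaseCh φ ρ) :=
  ⟨phaseCh_eq φ ρ ▸ hρ.1.mul_mul_conjTranspose_same _,
    by simpa [_root_.phaseCh, trace] using hρ.2⟩

omit [DecidableEq ι] in
theorem IsState.sum_norm_diag {σ : Matrix ι ι ℂ} (hσ : IsState σ) : ∑ i, ‖σ i i‖ = 1 := by
  have h : ((∑ i, ‖σ i i‖ : ℝ) : ℂ) = 1 := by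
    push_cast
    simp_rw [Complex.norm_of_nonneg' hσ.1.diag_nonneg]
    exact hσ.2
  exact_mod_cast h

theorem isState_diagonal_single (i : ι) : IsState (diagonal (Pi.single i 1 : ι → ℂ)) :=
  ⟨PosSemidef.diagonal (Pi.single_nonneg.mpr zero_le_one), by simp [trace_diagonal]⟩

theorem phaseCh_diagonal (φ : ι → ℝ) (d : ι → ℂ) : phaseCh φ (diagonal d) = diagonal d := by
  ext i j
  by_cases h : i = j <;> simp [phaseCh, h]

omit [Fintype κ] [DecidableEq κ] in
theorem map_diffOp (L : Matrix ι ι ℂ →ₗ[ℂ] Matrix κ κ ℂ) (lam : ℝ) (φ : ι → ℝ)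
    (ρ : Matrix ι ι ℂ) :
    L (diffOp lam φ ρ) = (lam : ℂ) • L ρ - ((1 - lam : ℝ) : ℂ) • L (phaseCh φ ρ) := by
  simp [diffOp]

theorem diffOp_diagonal (lam : ℝ) (φ : ι → ℝ) (d : ι → ℂ) :
    diffOp lam φ (diagonal d) = ((lam - (1 - lam) : ℝ) : ℂ) • diagonal d := by
  simp [diffOp, phaseCh_diagonal, sub_smul]

theorem deph_eq_diagonal_diag (σ : Matrix ι ι ℂ) : deph σ = diagonal (diag σ) := by
  ext i j
  by_cases h : i = j <;> simp [deph, h]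

theorem trace_deph (σ : Matrix ι ι ℂ) : trace (deph σ) = trace σ := by
  simp [deph_eq_diagonal_diag, trace]

theorem traceNorm_deph (σ : Matrix ι ι ℂ) : traceNorm (deph σ) = ∑ i, ‖σ i i‖ := by
  rw [deph_eq_diagonal_diag, traceNorm_diagonal]
  rfl

theorem traceNorm_deph_smul (a : ℂ) {σ : Matrix ι ι ℂ} (hσ : IsState σ) :
    traceNorm (deph (a • σ)) = ‖a‖ := by
  rw [traceNorm_deph]
  simp only [Matrix.smul_apply, smul_eq_mul, norm_mul, ← Finset.mul_sum, hσ.sum_norm_diag,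
    mul_one]

theorem traceNorm_deph_smul_sub_smul_le (a b : ℂ) {σ τ : Matrix ι ι ℂ} (hσ : IsState σ)
    (hτ : IsState τ) : traceNorm (deph (a • σ - b • τ)) ≤ ‖a‖ + ‖b‖ :=
  calc traceNorm (deph (a • σ - b • τ)) ≤ ∑ i, (‖a‖ * ‖σ i i‖ + ‖b‖ * ‖τ i i‖) := by
        rw [traceNorm_deph]
        refine Finset.sum_le_sum fun i _ => ?_
        simpa only [Matrix.sub_apply, Matrix.smul_apply, smul_eq_mul, norm_mul] using
          norm_sub_le (a * σ i i) (b * τ i i)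
    _ = ‖a‖ + ‖b‖ := by
        rw [Finset.sum_add_distrib, ← Finset.mul_sum, ← Finset.mul_sum, hσ.sum_norm_diag,
          hτ.sum_norm_diag, mul_one, mul_one]

noncomputable def replaceCh (τ : Matrix κ κ ℂ) : SO ι κ :=
  (traceLinearMap ι ℂ ℂ).smulRight τ

theorem replaceCh_apply (τ : Matrix κ κ ℂ) (ρ : Matrix ι ι ℂ) :
    replaceCh τ ρ = trace ρ • τ :=
  rfl

open scoped Kronecker in
theorem choi_replaceCh (τ : Matrix κ κ ℂ) : choi (replaceCh τ : SO ι κ) = τ ⊗ₖ 1 := by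
  ext ⟨p, i⟩ ⟨q, j⟩
  by_cases h : i = j <;>
    simp [choi, replaceCh_apply, trace_single_eq_same, trace_single_eq_of_ne, h, one_apply]

theorem isChannel_replaceCh {τ : Matrix κ κ ℂ} (hτ : IsState τ) :
    IsChannel (replaceCh τ : SO ι κ) :=
  ⟨by rw [choi_replaceCh]; exact hτ.1.kronecker PosSemidef.one, fun ρ => by
    rw [replaceCh_apply, trace_smul, hτ.2, smul_eq_mul, mul_one]⟩

theorem isDI_replaceCh (τ : Matrix κ κ ℂ) : IsDI (replaceCh τ : SO ι κ) := by
  refine LinearMap.ext fun ρ => ?_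
  simp [replaceCh_apply, trace_deph]

end

theorem Mpre_nonneg_general {α β γ : Type*} [Fintype α] [DecidableEq α] [Nonempty α]
    [Fintype β] [DecidableEq β] [Nonempty β] [Fintype γ] [DecidableEq γ]
    (lam : ℝ) (φ : α → ℝ)
    (Θ : SO β γ) (hΘ : IsChannel Θ) :
    0 ≤ Mpre lam φ Θ := by
  have hP : IsState (diagonal (Pi.single (Classical.arbitrary β) 1 : β → ℂ)) :=
    isState_diagonal_single _
  have hρ₀ : IsState (diagonal (Pi.single (Classical.arbitrary α) 1 : α → ℂ)) :=
    isState_diagonal_single _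
  rw [Mpre, sub_nonneg]
  refine le_csSup ⟨‖(lam : ℂ)‖ + ‖((1 - lam : ℝ) : ℂ)‖, ?_⟩
    ⟨replaceCh _, _, isChannel_replaceCh hP, isDI_replaceCh _, hρ₀, ?_⟩
  · rintro x ⟨Φ, ρ, hΦ, -, hρ, rfl⟩
    rw [map_diffOp Φ, map_sub, map_smul, map_smul]
    exact traceNorm_deph_smul_sub_smul_le _ _ (hΘ.isState_apply (hΦ.isState_apply hρ))
      (hΘ.isState_apply (hΦ.isState_apply (hρ.phaseCh φ)))
  · rw [diffOp_diagonal, map_smul, map_smul,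
      traceNorm_deph_smul _ (hΘ.isState_apply ((isChannel_replaceCh hP).isState_apply hρ₀)),
      Complex.norm_real, Real.norm_eq_abs]

/-- non-negativity of the pre-processed improvement. -/
theorem Mpre_nonneg {α β γ : Type*} [Fintype α] [DecidableEq α] [Nonempty α]
    [Fintype β] [DecidableEq β] [Nonempty β] [Fintype γ] [DecidableEq γ] [Nonempty γ]
    (lam : ℝ) (hlam : lam ∈ Set.Icc (0 : ℝ) 1) (φ : α → ℝ)
    (Θ : SO β γ) (hΘ : IsChannel Θ) :
    0 ≤ Mpre lam φ Θ :=
  Mpre_nonneg_general lam φ Θ hΘ
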